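/- Let a and b be positive integers and let μ ∈ R(a,b) have frontier w_1 w_2…w_{a+b} with levels l_0, l_1, …, l_{a+b}. Then h⁻_{b,a}(μ) equals the number of pairs (i,j) with 1 ≤ i < j ≤ a+b, w_i = E, w_j = N, and 1 ≤ l_j − l_i ≤ a+b. -/

import Mathlib

/-- `μ : ℕ → ℕ` represents a partition in `R(a,b)`: the value `μ i` is the
`(i+1)`-th part; the parts are weakly decreasing, at most `b`, and zero from
index `a` on (so the Young diagram of `μ` fits in an `a × b` box). -/
def InBox (a b : ℕ) (μ : ℕ → ℕ) : Prop :=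
  (∀ i j : ℕ, i ≤ j → μ j ≤ μ i) ∧ μ 0 ≤ b ∧ ∀ i, a ≤ i → μ i = 0

/-- `μ ∈ D(a,b)`: `μ ∈ R(a,b)` and `a·μ_j ≤ b·(a−j)` for all (1-indexed) `j`;
in terms of the 0-indexed parts this reads `a·μ(i) ≤ b·(a−1−i)`. -/
def InTriangle (a b : ℕ) (μ : ℕ → ℕ) : Prop :=
  InBox a b μ ∧ ∀ i, i < a → a * μ i ≤ b * (a - 1 - i)

/-- The leg of the cell in (0-indexed) row `i`, column `j` of the Young diagram
of `μ`: the number of cells strictly below it in its column. -/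
noncomputable def leg (μ : ℕ → ℕ) (i j : ℕ) : ℕ :=
  {i' : ℕ | i < i' ∧ j < μ i'}.ncard

/-- The arm of the cell in row `i`, column `j` (as an integer): the number of
cells strictly to its right in its row. -/
def armZ (μ : ℕ → ℕ) (i j : ℕ) : ℤ := (μ i : ℤ) - 1 - j

/-- `h⁺_{b,a}(μ)`: the number of cells `c` of `μ` with
`−a < a·arm(c) − b·leg(c) ≤ b`. -/
noncomputable def hplus (a b : ℕ) (μ : ℕ → ℕ) : ℕ :=
  {c : ℕ × ℕ | c.2 < μ c.1 ∧
    -(a : ℤ) < (a : ℤ) * armZ μ c.1 c.2 - (b : ℤ) * leg μ c.1 c.2 ∧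
    (a : ℤ) * armZ μ c.1 c.2 - (b : ℤ) * leg μ c.1 c.2 ≤ (b : ℤ)}.ncard

/-- The frontier of `μ ∈ R(a,b)`: the lattice word from `(0,0)` to `(b,a)`
(`true` = N, `false` = E) tracing the boundary of the diagram of `μ` inside the
`a × b` box; its `j`-th N (from the start) is preceded by exactly `μ_{a+1−j}` E's. -/
def frontierWord (a b : ℕ) (μ : ℕ → ℕ) : List Bool :=
  ((List.range a).flatMap fun y =>
    List.replicate (μ (a - 1 - y) - μ (a - y)) false ++ [true]) ++
  List.replicate (b - μ 0) false

/-- The level `l_i = b·(#N) − a·(#E)` of the lattice point reached after the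
first `i` steps of the word `w` (with `true` = N, `false` = E). -/
def levelAt (a b : ℕ) (w : List Bool) (i : ℕ) : ℤ :=
  (b : ℤ) * (w.take i).count true - (a : ℤ) * (w.take i).count false

/-- `ml_{b,a}`: the minimum of the levels `l_0, l_1, …, l_{length w}` along `w`. -/
def minLevel (a b : ℕ) (w : List Bool) : ℤ :=
  ((Finset.range (w.length + 1)).image fun i => levelAt a b w i).min'
    (Finset.Nonempty.image Finset.nonempty_range_add_one _)

/-- `h⁻_{b,a}(μ)`: the number of cells `c` of `μ` with
`−a ≤ a·arm(c) − b·leg(c) < b`. -/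
noncomputable def hminus (a b : ℕ) (μ : ℕ → ℕ) : ℕ :=
  {c : ℕ × ℕ | c.2 < μ c.1 ∧
    -(a : ℤ) ≤ (a : ℤ) * armZ μ c.1 c.2 - (b : ℤ) * leg μ c.1 c.2 ∧
    (a : ℤ) * armZ μ c.1 c.2 - (b : ℤ) * leg μ c.1 c.2 < (b : ℤ)}.ncard

/-!
The cells of `μ` correspond bijectively to the pairs (E step, N step) of the frontier with the
E step before the N step: the cell in row `r` and column `c` goes to the E step below column `c`
and the N step at the end of row `r`. Between these two steps the frontier makes `leg + 1` N steps
and `arm + 1` E steps, so the level rises by `b·(leg + 1) − a·(arm + 1)`, and the condition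
`1 ≤ l_j − l_i ≤ a + b` is exactly `−a ≤ a·arm − b·leg < b`.
-/

open List

namespace List

theorem getElem?_length_of_append_singleton_isPrefix {α : Type*} {L w : List α} {x : α}
    (h : L ++ [x] <+: w) : w[L.length]? = some x := by
  obtain ⟨t, rfl⟩ := h
  simp

variable {α : Type*} [DecidableEq α]

theorem card_filter_getElem?_eq_count (l : List α) (x : α) :
    ((Finset.range l.length).filter fun p => l[p]? = some x).card = l.count x := by
  induction l with
  | nil => simp
  | cons y l ih =>
    rw [Finset.card_filter] at ih ⊢
    rw [length_cons, Finset.sum_range_succ']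
    simp only [getElem?_cons_succ, getElem?_cons_zero, ih, count_cons]
    by_cases h : y = x <;> simp [h]

theorem exists_lt_eq_of_getElem?_eq {l : List α} {x : α} {n : ℕ} {f : ℕ → ℕ}
    (hf : ∀ i < n, l[f i]? = some x) (hinj : Set.InjOn f (Set.Iio n)) (hn : l.count x ≤ n)
    {p : ℕ} (hp : l[p]? = some x) : ∃ i < n, f i = p := by
  have hsurj := Finset.surjOn_of_injOn_of_card_le f
    (s := Finset.range n) (t := (Finset.range l.length).filter fun q => l[q]? = some x)
    (fun i hi => by
      have := hf i (Finset.mem_range.mp hi)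
      simpa [(getElem?_eq_some_iff.mp this).1] using this)
    (by simpa [Set.InjOn] using hinj)
    (by rw [card_filter_getElem?_eq_count, Finset.card_range]; exact hn)
  obtain ⟨i, hi, rfl⟩ :=
    hsurj (Finset.mem_filter.mpr ⟨Finset.mem_range.mpr (getElem?_eq_some_iff.mp hp).1, hp⟩)
  exact ⟨i, Finset.mem_range.mp hi, rfl⟩

end List

section Frontier

variable {a b : ℕ} {μ : ℕ → ℕ} {r c y : ℕ}

theorem levelAt_length_of_isPrefix {L w : List Bool} (h : L <+: w) :
    levelAt a b w L.length = b * L.count true - a * L.count false := by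
  rw [levelAt, ← prefix_iff_eq_take.mp h]

theorem InBox.antitone (hμ : InBox a b μ) : Antitone μ := fun i j h => hμ.1 i j h

theorem InBox.le (hμ : InBox a b μ) (i : ℕ) : μ i ≤ b := (hμ.1 0 i i.zero_le).trans hμ.2.1

theorem InBox.lt_of_lt_apply (hμ : InBox a b μ) (hc : c < μ r) : r < a := by
  by_contra! h
  rw [hμ.2.2 r h] at hc
  exact c.not_lt_zero hc

def frontierPrefix (a : ℕ) (μ : ℕ → ℕ) (y : ℕ) : List Bool :=
  (range y).flatMap fun k => replicate (μ (a - 1 - k) - μ (a - k)) false ++ [true]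

theorem frontierPrefix_succ (y : ℕ) : frontierPrefix a μ (y + 1) =
    frontierPrefix a μ y ++ (replicate (μ (a - 1 - y) - μ (a - y)) false ++ [true]) := by
  simp [frontierPrefix, range_succ]

theorem count_true_frontierPrefix (y : ℕ) : (frontierPrefix a μ y).count true = y := by
  induction y with
  | zero => simp [frontierPrefix]
  | succ y ih => simp [frontierPrefix_succ, ih, count_replicate]

theorem count_false_frontierPrefix (hμ : Antitone μ) (hμa : μ a = 0) (hy : y ≤ a) :
    (frontierPrefix a μ y).count false = μ (a - y) := by
  induction y with
  | zero => simp [frontierPrefix, hμa]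
  | succ y ih =>
    have hle : μ (a - y) ≤ μ (a - 1 - y) := hμ (by omega)
    rw [frontierPrefix_succ, count_append, count_append, ih (by omega), count_replicate_self,
      show [true].count false = 0 from rfl, show a - (y + 1) = a - 1 - y by omega]
    omega

theorem frontierWord_eq_frontierPrefix_append (a b : ℕ) (μ : ℕ → ℕ) :
    frontierWord a b μ = frontierPrefix a μ a ++ replicate (b - μ 0) false := rfl

theorem frontierPrefix_isPrefix {y' : ℕ} (hy : y ≤ y') :
    frontierPrefix a μ y <+: frontierPrefix a μ y' := by
  induction y', hy using Nat.le_induction with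
  | base => exact prefix_rfl
  | succ n _ ih => exact ih.trans (frontierPrefix_succ n ▸ prefix_append _ _)

theorem frontierPrefix_isPrefix_frontierWord (hy : y ≤ a) :
    frontierPrefix a μ y <+: frontierWord a b μ :=
  (frontierPrefix_isPrefix hy).trans (prefix_append _ _)

theorem count_true_frontierWord : (frontierWord a b μ).count true = a := by
  simp [frontierWord_eq_frontierPrefix_append, count_true_frontierPrefix, count_replicate]

theorem count_false_frontierWord (hμ : InBox a b μ) : (frontierWord a b μ).count false = b := by
  have := count_false_frontierPrefix hμ.antitone (hμ.2.2 a le_rfl) le_rfl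
  simp [frontierWord_eq_frontierPrefix_append, this, hμ.2.1]

def shortRows (a : ℕ) (μ : ℕ → ℕ) (c : ℕ) : ℕ :=
  ((Finset.range a).filter fun r => μ r ≤ c).card

theorem shortRows_le (a : ℕ) (μ : ℕ → ℕ) (c : ℕ) : shortRows a μ c ≤ a :=
  (Finset.card_filter_le _ _).trans (Finset.card_range a).le

theorem shortRows_mono (a : ℕ) (μ : ℕ → ℕ) : Monotone (shortRows a μ) :=
  fun _ _ h => Finset.card_le_card fun _ hr => by
    simp only [Finset.mem_filter] at hr ⊢
    exact ⟨hr.1, hr.2.trans h⟩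

theorem shortRows_lt_iff (hμ : Antitone μ) (hr : r < a) : shortRows a μ c < a - r ↔ c < μ r := by
  constructor
  · intro h
    by_contra! hrc
    have : Finset.Ico r a ⊆ (Finset.range a).filter fun r => μ r ≤ c := fun i hi => by
      simp only [Finset.mem_Ico] at hi
      simpa [hi.2] using (hμ hi.1).trans hrc
    have := Finset.card_le_card this
    rw [Nat.card_Ico] at this
    exact absurd h (not_lt.mpr this)
  · intro hrc
    have : ((Finset.range a).filter fun r => μ r ≤ c) ⊆ Finset.Ioo r a := fun i hi => by
      simp only [Finset.mem_filter, Finset.mem_range] at hi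
      simp only [Finset.mem_Ioo]
      refine ⟨lt_of_not_ge fun hir => ?_, hi.1⟩
      exact absurd (hrc.trans_le (hμ hir)) (not_lt.mpr hi.2)
    have := Finset.card_le_card this
    rw [Nat.card_Ioo] at this
    unfold shortRows
    omega

theorem leg_eq_sub_shortRows (hμ : Antitone μ) (hzero : ∀ i, a ≤ i → μ i = 0) (r c : ℕ) :
    leg μ r c = a - shortRows a μ c - (r + 1) := by
  have hcol : {i | r < i ∧ c < μ i} = ↑(Finset.Ioo r (a - shortRows a μ c)) := by
    ext i
    simp only [Set.mem_ofPred_eq, Finset.coe_Ioo, Set.mem_Ioo, and_congr_right_iff]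
    intro _
    by_cases hi : i < a
    · rw [← shortRows_lt_iff hμ hi]
      omega
    · simp only [hzero i (not_lt.mp hi), Nat.not_lt_zero, false_iff]
      omega
  rw [leg, hcol, Set.ncard_coe_finset, Nat.card_Ioo]
  omega

/-- The 0-indexed positions in `frontierWord a b μ` of the E step below column `c` and of the
N step at the end of row `r`. -/
def eStep (a : ℕ) (μ : ℕ → ℕ) (c : ℕ) : ℕ := c + shortRows a μ c

def nStep (a : ℕ) (μ : ℕ → ℕ) (r : ℕ) : ℕ := a - 1 - r + μ r

theorem eStep_strictMono (a : ℕ) (μ : ℕ → ℕ) : StrictMono (eStep a μ) :=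
  fun c c' h => by
    have := shortRows_mono a μ h.le
    unfold eStep
    omega

theorem nStep_injOn (hμ : Antitone μ) : Set.InjOn (nStep a μ) (Set.Iio a) := by
  refine StrictAntiOn.injOn fun r hr r' hr' h => ?_
  have := hμ h.le
  simp only [Set.mem_Iio] at hr hr'
  unfold nStep
  omega

theorem eStep_lt_nStep_iff (hμ : Antitone μ) (hr : r < a) :
    eStep a μ c < nStep a μ r ↔ c < μ r := by
  have := shortRows_lt_iff (c := c) hμ hr
  unfold eStep nStep
  omega

theorem exists_isPrefix_frontierWord_nStep (hμ : Antitone μ) (hμa : μ a = 0) (hr : r < a) :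
    ∃ L, L ++ [true] <+: frontierWord a b μ ∧
      L.count true = a - 1 - r ∧ L.count false = μ r := by
  have hprefix := frontierPrefix_isPrefix_frontierWord (a := a) (b := b) (μ := μ)
    (y := a - 1 - r + 1) (by omega)
  rw [frontierPrefix_succ, show a - 1 - (a - 1 - r) = r by omega,
    show a - (a - 1 - r) = r + 1 by omega, ← append_assoc] at hprefix
  refine ⟨_, hprefix, by simp [count_true_frontierPrefix, count_replicate], ?_⟩
  have hcount := count_false_frontierPrefix hμ hμa (show a - 1 - r ≤ a by omega)
  have : μ (r + 1) ≤ μ r := hμ r.le_succ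
  rw [count_append, hcount, show a - (a - 1 - r) = r + 1 by omega, count_replicate_self]
  omega

theorem exists_isPrefix_frontierWord_eStep (hμ : InBox a b μ) (hc : c < b) :
    ∃ L, L ++ [false] <+: frontierWord a b μ ∧
      L.count true = shortRows a μ c ∧ L.count false = c := by
  set m := shortRows a μ c
  have hm : m ≤ a := shortRows_le a μ c
  have hlow : μ (a - m) ≤ c := by
    rcases Nat.eq_zero_or_pos m with h0 | hpos
    · simp [h0, hμ.2.2 a le_rfl]
    · exact not_lt.mp ((shortRows_lt_iff (a := a) (r := a - m) (c := c) hμ.antitone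
        (by omega)).not.mp (by omega))
  -- the E step of column `c` lies in block `m + 1`, or in the final run of E's if `m = a`
  obtain ⟨k, hk, hblock⟩ : ∃ k, c < μ (a - m) + k ∧
      frontierPrefix a μ m ++ replicate k false <+: frontierWord a b μ := by
    rcases hm.lt_or_eq with hlt | heq
    · have hhigh : c < μ (a - 1 - m) :=
        (shortRows_lt_iff (a := a) (r := a - 1 - m) (c := c) hμ.antitone
          (by omega)).mp (by omega)
      refine ⟨μ (a - 1 - m) - μ (a - m), by omega, ?_⟩
      have := frontierPrefix_isPrefix_frontierWord (b := b) (μ := μ) (Nat.succ_le_of_lt hlt)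
      rw [frontierPrefix_succ, ← append_assoc] at this
      exact (prefix_append _ _).trans this
    · refine ⟨b - μ 0, ?_, by rw [heq]; exact prefix_rfl⟩
      rw [heq, Nat.sub_self]
      omega
  refine ⟨frontierPrefix a μ m ++ replicate (c - μ (a - m)) false, IsPrefix.trans ?_ hblock,
    by simp [count_true_frontierPrefix, count_replicate], ?_⟩
  · rw [append_assoc, prefix_append_right_inj, ← replicate_succ']
    exact prefix_replicate_iff.mpr ⟨by rw [length_replicate]; omega, by simp⟩
  · rw [count_append, count_false_frontierPrefix hμ.antitone (hμ.2.2 a le_rfl) hm,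
      count_replicate_self]
    omega

theorem getElem?_frontierWord_eStep (hμ : InBox a b μ) (hc : c < b) :
    (frontierWord a b μ)[eStep a μ c]? = some false := by
  obtain ⟨L, hL, htrue, hfalse⟩ := exists_isPrefix_frontierWord_eStep hμ hc
  rw [eStep, ← htrue, ← hfalse, add_comm, count_true_add_count_false]
  exact getElem?_length_of_append_singleton_isPrefix hL

theorem getElem?_frontierWord_nStep (hμ : Antitone μ) (hμa : μ a = 0) (hr : r < a) :
    (frontierWord a b μ)[nStep a μ r]? = some true := by
  obtain ⟨L, hL, htrue, hfalse⟩ := exists_isPrefix_frontierWord_nStep (b := b) hμ hμa hr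
  rw [nStep, ← htrue, ← hfalse, count_true_add_count_false]
  exact getElem?_length_of_append_singleton_isPrefix hL

theorem levelAt_frontierWord_eStep (hμ : InBox a b μ) (hc : c < b) :
    levelAt a b (frontierWord a b μ) (eStep a μ c + 1) =
      b * shortRows a μ c - a * (c + 1 : ℕ) := by
  obtain ⟨L, hL, htrue, hfalse⟩ := exists_isPrefix_frontierWord_eStep hμ hc
  have := levelAt_length_of_isPrefix (a := a) (b := b) hL
  rw [length_append, length_singleton, ← count_true_add_count_false, htrue, hfalse] at this
  rw [eStep, add_comm c, this]
  simp [htrue, hfalse]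

theorem levelAt_frontierWord_nStep (hμ : Antitone μ) (hμa : μ a = 0) (hr : r < a) :
    levelAt a b (frontierWord a b μ) (nStep a μ r + 1) = b * (a - r : ℕ) - a * μ r := by
  obtain ⟨L, hL, htrue, hfalse⟩ := exists_isPrefix_frontierWord_nStep (b := b) hμ hμa hr
  have := levelAt_length_of_isPrefix (a := a) (b := b) hL
  rw [length_append, length_singleton, ← count_true_add_count_false, htrue, hfalse] at this
  rw [nStep, this]
  simp [htrue, hfalse, show a - 1 - r + 1 = a - r by omega]

theorem levelAt_nStep_sub_levelAt_eStep (hμ : InBox a b μ) (hc : c < μ r) :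
    levelAt a b (frontierWord a b μ) (nStep a μ r + 1) -
        levelAt a b (frontierWord a b μ) (eStep a μ c + 1) =
      b - (a * armZ μ r c - b * leg μ r c) := by
  have hr := hμ.lt_of_lt_apply hc
  have hshort := (shortRows_lt_iff hμ.antitone hr).mpr hc
  have hleg : (leg μ r c : ℤ) = a - shortRows a μ c - (r + 1) := by
    rw [leg_eq_sub_shortRows hμ.antitone hμ.2.2]
    omega
  rw [levelAt_frontierWord_nStep hμ.antitone (hμ.2.2 a le_rfl) hr,
    levelAt_frontierWord_eStep hμ (hc.trans_le (hμ.le r)), hleg, armZ]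
  push_cast [hr.le]
  ring

theorem exists_eStep_eq (hμ : InBox a b μ) {p : ℕ}
    (hp : (frontierWord a b μ)[p]? = some false) : ∃ c < b, eStep a μ c = p :=
  exists_lt_eq_of_getElem?_eq (fun _ hc => getElem?_frontierWord_eStep hμ hc)
    (eStep_strictMono a μ).injective.injOn (count_false_frontierWord hμ).le hp

theorem exists_nStep_eq (hμ : Antitone μ) (hμa : μ a = 0) {p : ℕ}
    (hp : (frontierWord a b μ)[p]? = some true) : ∃ r < a, nStep a μ r = p :=
  exists_lt_eq_of_getElem?_eq (fun _ hr => getElem?_frontierWord_nStep hμ hμa hr)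
    (nStep_injOn hμ) count_true_frontierWord.le hp

def hminusCells (a b : ℕ) (μ : ℕ → ℕ) : Set (ℕ × ℕ) :=
  {c : ℕ × ℕ | c.2 < μ c.1 ∧
    -(a : ℤ) ≤ (a : ℤ) * armZ μ c.1 c.2 - (b : ℤ) * leg μ c.1 c.2 ∧
    (a : ℤ) * armZ μ c.1 c.2 - (b : ℤ) * leg μ c.1 c.2 < (b : ℤ)}

def frontierPairs (a b : ℕ) (w : List Bool) : Set (ℕ × ℕ) :=
  {p : ℕ × ℕ | 1 ≤ p.1 ∧ p.1 < p.2 ∧ p.2 ≤ a + b ∧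
    w[p.1 - 1]? = some false ∧ w[p.2 - 1]? = some true ∧
    1 ≤ levelAt a b w p.2 - levelAt a b w p.1 ∧
    levelAt a b w p.2 - levelAt a b w p.1 ≤ (a : ℤ) + b}

def cellToFrontierPair (a : ℕ) (μ : ℕ → ℕ) (cell : ℕ × ℕ) : ℕ × ℕ :=
  (eStep a μ cell.2 + 1, nStep a μ cell.1 + 1)

theorem mapsTo_cellToFrontierPair (hμ : InBox a b μ) :
    Set.MapsTo (cellToFrontierPair a μ) (hminusCells a b μ)
      (frontierPairs a b (frontierWord a b μ)) := by
  rintro ⟨r, c⟩ ⟨hcell, hlow, hhigh⟩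
  dsimp only at hcell hlow hhigh
  have hr := hμ.lt_of_lt_apply hcell
  have hlevel := levelAt_nStep_sub_levelAt_eStep hμ hcell
  have hrow := hμ.le r
  simp only [frontierPairs, cellToFrontierPair, Set.mem_ofPred_eq, Nat.add_sub_cancel]
  refine ⟨le_add_self, Nat.succ_lt_succ ((eStep_lt_nStep_iff hμ.antitone hr).mpr hcell),
    by unfold nStep; omega, getElem?_frontierWord_eStep hμ (hcell.trans_le hrow),
    getElem?_frontierWord_nStep hμ.antitone (hμ.2.2 a le_rfl) hr, by linarith, by linarith⟩

theorem injOn_cellToFrontierPair (hμ : InBox a b μ) :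
    Set.InjOn (cellToFrontierPair a μ) (hminusCells a b μ) := by
  rintro ⟨r, c⟩ ⟨hcell, -⟩ ⟨r', c'⟩ ⟨hcell', -⟩ h
  simp only [cellToFrontierPair, Prod.mk.injEq, add_left_inj] at h
  exact Prod.ext (nStep_injOn hμ.antitone (hμ.lt_of_lt_apply hcell) (hμ.lt_of_lt_apply hcell') h.2)
    ((eStep_strictMono a μ).injective h.1)

theorem surjOn_cellToFrontierPair (hμ : InBox a b μ) :
    Set.SurjOn (cellToFrontierPair a μ) (hminusCells a b μ)
      (frontierPairs a b (frontierWord a b μ)) := by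
  rintro ⟨i, j⟩ ⟨hi, hij, -, hE, hN, hlow, hhigh⟩
  obtain ⟨c, -, hc⟩ := exists_eStep_eq hμ hE
  obtain ⟨r, hr, hr'⟩ := exists_nStep_eq hμ.antitone (hμ.2.2 a le_rfl) hN
  have hcell : c < μ r := (eStep_lt_nStep_iff hμ.antitone hr).mp (by omega)
  have hlevel := levelAt_nStep_sub_levelAt_eStep hμ hcell
  rw [hc, hr', Nat.sub_add_cancel hi, Nat.sub_add_cancel (by omega)] at hlevel
  refine ⟨(r, c), ⟨hcell, by dsimp only; linarith, by dsimp only; linarith⟩, ?_⟩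
  simp only [cellToFrontierPair, hc, hr']
  ext <;> dsimp only <;> omega

end Frontier

theorem stmt10_general (a b : ℕ)
    (μ : ℕ → ℕ) (hμ : InBox a b μ) :
    hminus a b μ =
      {p : ℕ × ℕ | 1 ≤ p.1 ∧ p.1 < p.2 ∧ p.2 ≤ a + b ∧
        (frontierWord a b μ)[p.1 - 1]? = some false ∧
        (frontierWord a b μ)[p.2 - 1]? = some true ∧
        1 ≤ levelAt a b (frontierWord a b μ) p.2 -
              levelAt a b (frontierWord a b μ) p.1 ∧
        levelAt a b (frontierWord a b μ) p.2 -
              levelAt a b (frontierWord a b μ) p.1 ≤ (a : ℤ) + b}.ncard :=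
  Set.BijOn.ncard_eq ⟨mapsTo_cellToFrontierPair hμ, injOn_cellToFrontierPair hμ,
    surjOn_cellToFrontierPair hμ⟩

/-- for `μ ∈ R(a,b)` with frontier `w_1 ⋯ w_{a+b}` and levels
`l_0, …, l_{a+b}`, the statistic `h⁻_{b,a}(μ)` equals the number of pairs
`(i, j)` with `1 ≤ i < j ≤ a+b`, `w_i = E`, `w_j = N` and `1 ≤ l_j − l_i ≤ a+b`. -/
theorem stmt10 (a b : ℕ) (ha : 0 < a) (hb : 0 < b)
    (μ : ℕ → ℕ) (hμ : InBox a b μ) :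
    hminus a b μ =
      {p : ℕ × ℕ | 1 ≤ p.1 ∧ p.1 < p.2 ∧ p.2 ≤ a + b ∧
        (frontierWord a b μ)[p.1 - 1]? = some false ∧
        (frontierWord a b μ)[p.2 - 1]? = some true ∧
        1 ≤ levelAt a b (frontierWord a b μ) p.2 -
              levelAt a b (frontierWord a b μ) p.1 ∧
        levelAt a b (frontierWord a b μ) p.2 -
              levelAt a b (frontierWord a b μ) p.1 ≤ (a : ℤ) + b}.ncard :=
  stmt10_general a b μ hμ
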